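/- Let n ≥ 1 be an integer and let b, c be real numbers such that b is not a non-positive integer, c is not a non-positive integer, and c − b ∉ {0, −1, …, −(n−1)}. Then the hypergeometric polynomial P(z) = ₂F₁(−n, b; c; z) has degree n, satisfies P(0) = 1 and P(1) = (c−b)_n/(c)_n ≠ 0, and all n of its complex roots are simple (P is squarefree); moreover none of its roots equals 0 or 1. -/

import Mathlib

/-- The ascending Pochhammer symbol `(x)_k = x (x+1) ⋯ (x+k-1)`, with `(x)_0 = 1`. -/
noncomputable def poch (x : ℂ) (k : ℕ) : ℂ := ∏ i ∈ Finset.range k, (x + (i : ℂ))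

/-- The hypergeometric polynomial
`₂F₁(-n, b; c; z) = Σ_{k=0}^{n} (-1)^k binom(n,k) ((b)_k/(c)_k) z^k`. -/
noncomputable def hyp2F1 (n : ℕ) (b c : ℂ) : Polynomial ℂ :=
  ∑ k ∈ Finset.range (n + 1),
    Polynomial.C ((-1) ^ k * (n.choose k : ℂ) * poch b k / poch c k) * Polynomial.X ^ k

lemma poch_succ (x : ℂ) (k : ℕ) : poch x (k+1) = poch x k * (x + k) := by
  simp [poch, Finset.prod_range_succ]

lemma poch_succ' (x : ℂ) (k : ℕ) : poch x (k+1) = x * poch (x+1) k := by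
  rw [poch, poch, Finset.prod_range_succ']
  rw [mul_comm]
  congr 1
  · simp
  · apply Finset.prod_congr rfl
    intro i _
    push_cast; ring

lemma poch_add (x : ℂ) (k m : ℕ) : poch x (k + m) = poch x k * poch (x + k) m := by
  rw [poch, poch, poch, Finset.prod_range_add]
  congr 1
  apply Finset.prod_congr rfl
  intro i _
  push_cast; ring

lemma poch_ne_zero {x : ℝ} (h : ∀ m : ℕ, x ≠ -(m:ℝ)) (k : ℕ) : poch (x:ℂ) k ≠ 0 := by
  rw [poch]
  apply Finset.prod_ne_zero_iff.mpr
  intro i _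
  intro h0
  apply h i
  have : ((x + i : ℝ) : ℂ) = 0 := by push_cast; exact_mod_cast h0
  have := Complex.ofReal_eq_zero.mp this
  linarith

noncomputable def acoef (n : ℕ) (b c : ℂ) (k : ℕ) : ℂ :=
  (-1) ^ k * (n.choose k : ℂ) * poch b k / poch c k

lemma hyp_coeff (n : ℕ) (b c : ℂ) (k : ℕ) :
    (hyp2F1 n b c).coeff k = acoef n b c k := by
  rw [hyp2F1, Polynomial.finset_sum_coeff]
  simp only [Polynomial.coeff_C_mul, Polynomial.coeff_X_pow]
  simp only [mul_ite, mul_one, mul_zero]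
  rw [Finset.sum_ite_eq (Finset.range (n+1)) k (fun x => (-1) ^ x * (n.choose x : ℂ) * poch b x / poch c x)]
  by_cases h : k ∈ Finset.range (n+1)
  · simp [h, acoef]
  · simp only [h, if_false]
    rw [acoef, Nat.choose_eq_zero_of_lt (by simpa using Nat.lt_of_succ_le (not_lt.mp (by simpa [Finset.mem_range] using h)))]
    simp

lemma choose_cast (n k : ℕ) :
    ((k:ℂ)+1) * (n.choose (k+1) : ℂ) = ((n:ℂ) - k) * (n.choose k) := by
  rcases le_or_gt n k with h | h
  · rcases eq_or_lt_of_le h with rfl | h'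
    · simp [Nat.choose_eq_zero_of_lt (Nat.lt_succ_self n)]
    · rw [Nat.choose_eq_zero_of_lt h', Nat.choose_eq_zero_of_lt (h'.trans (Nat.lt_succ_self k))]
      simp
  · have h2 := Nat.choose_succ_right_eq n k
    have h3 : ((n.choose (k+1) * (k+1) : ℕ) : ℂ) = ((n.choose k * (n - k) : ℕ) : ℂ) := by
      norm_cast
    push_cast [Nat.cast_sub h.le] at h3
    linear_combination h3

lemma acoef_rec (n : ℕ) (b c : ℂ) (k : ℕ) (hck : poch c k ≠ 0) (hck1 : c + k ≠ 0) :
    ((k:ℂ)+1) * (c + k) * acoef n b c (k+1) = ((k:ℂ) - n) * (b + k) * acoef n b c k := by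
  rw [acoef, acoef, poch_succ, poch_succ]
  have key := choose_cast n k
  have hinv := mul_inv_cancel₀ hck1
  simp only [div_eq_mul_inv, mul_inv]
  linear_combination ((-1:ℂ)^(k+1) * poch b k * (b+k) * (poch c k)⁻¹ * ((k:ℂ)+1) * (n.choose (k+1) : ℂ)) * hinv
    + ((-1:ℂ)^(k+1) * poch b k * (b+k) * (poch c k)⁻¹) * key

open Polynomial in
lemma hyp_ode (n : ℕ) (b c : ℂ) (hpc : ∀ k : ℕ, poch c k ≠ 0) (hcm : ∀ k : ℕ, c + (k:ℂ) ≠ 0) :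
    let P := hyp2F1 n b c
    X * derivative (derivative P) - X * (X * derivative (derivative P))
      + C c * derivative P - C (b - n + 1) * (X * derivative P)
      + C ((n:ℂ) * b) * P = 0 := by
  intro P
  apply Polynomial.ext
  intro k
  have hrec : ∀ j : ℕ, ((j:ℂ)+1) * (c + j) * acoef n b c (j+1)
      = ((j:ℂ) - n) * (b + j) * acoef n b c j := fun j => acoef_rec n b c j (hpc j) (hcm j)
  match k with
  | 0 =>
    simp only [Polynomial.coeff_add, Polynomial.coeff_sub, Polynomial.coeff_C_mul,
      Polynomial.mul_coeff_zero, Polynomial.coeff_X_zero, Polynomial.coeff_C_zero, Polynomial.coeff_derivative,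
      Polynomial.coeff_zero, hyp_coeff, P]
    have r0 := hrec 0
    push_cast at r0 ⊢
    linear_combination r0
  | 1 =>
    simp only [Polynomial.coeff_add, Polynomial.coeff_sub, Polynomial.coeff_C_mul,
      Polynomial.coeff_X_mul, Polynomial.mul_coeff_zero, Polynomial.coeff_X_zero, Polynomial.coeff_C_zero,
      Polynomial.coeff_derivative, Polynomial.coeff_zero, hyp_coeff, P]
    have r1 := hrec 1
    push_cast at r1 ⊢
    linear_combination r1
  | (m+2) =>
    simp only [Polynomial.coeff_add, Polynomial.coeff_sub, Polynomial.coeff_C_mul,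
      Polynomial.coeff_X_mul, Polynomial.coeff_derivative, Polynomial.coeff_zero,
      hyp_coeff, P]
    have r := hrec (m+2)
    push_cast at r ⊢
    linear_combination r

open Polynomial in
lemma ode_family (n : ℕ) (b c : ℂ) (hpc : ∀ k : ℕ, poch c k ≠ 0) (hcm : ∀ k : ℕ, c + (k:ℂ) ≠ 0)
    (j : ℕ) :
    ∃ u v w : ℂ,
      X * derivative^[j+2] (hyp2F1 n b c) - X * (X * derivative^[j+2] (hyp2F1 n b c))
        + C u * derivative^[j+1] (hyp2F1 n b c) + C v * (X * derivative^[j+1] (hyp2F1 n b c))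
        + C w * derivative^[j] (hyp2F1 n b c) = 0 := by
  induction j with
  | zero =>
    refine ⟨c, -(b - n + 1), (n:ℂ) * b, ?_⟩
    have h := hyp_ode n b c hpc hcm
    simp only [Function.iterate_succ_apply', Function.iterate_zero_apply] at *
    rw [map_neg]
    linear_combination h
  | succ j ih =>
    obtain ⟨u, v, w, huvw⟩ := ih
    refine ⟨u + 1, v - 2, v + w, ?_⟩
    have h := congrArg derivative huvw
    simp only [derivative_add, derivative_sub, derivative_mul, derivative_X, derivative_C,
      derivative_zero, one_mul, mul_one, zero_mul, add_zero] at h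
    simp only [show j+1+2 = (j+2)+1 from rfl, show j+1+1 = (j+1)+1 from rfl,
      Function.iterate_succ_apply'] at *
    simp only [map_add, map_sub, map_one, map_ofNat]
    linear_combination h

open Polynomial in
lemma hyp_vanish (n : ℕ) (b c : ℂ) (hpc : ∀ k : ℕ, poch c k ≠ 0) (hcm : ∀ k : ℕ, c + (k:ℂ) ≠ 0)
    (z : ℂ) (hz0 : z ≠ 0) (hz1 : z ≠ 1)
    (h0 : (hyp2F1 n b c).eval z = 0) (h1 : (derivative (hyp2F1 n b c)).eval z = 0) :
    ∀ j : ℕ, (derivative^[j] (hyp2F1 n b c)).eval z = 0 := by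
  intro j
  induction j using Nat.strong_induction_on with
  | _ j ih =>
    match j with
    | 0 => simpa using h0
    | 1 => simpa using h1
    | (m+2) =>
      obtain ⟨u, v, w, huvw⟩ := ode_family n b c hpc hcm m
      have he := congrArg (Polynomial.eval z) huvw
      simp only [eval_add, eval_sub, eval_mul, eval_X, eval_C, eval_zero] at he
      rw [ih (m+1) (by omega), ih m (by omega)] at he
      have h2 : z * (1 - z) * (derivative^[m+2] (hyp2F1 n b c)).eval z = 0 := by
        linear_combination he
      have h3 := mul_ne_zero hz0 (sub_ne_zero.mpr (Ne.symm hz1))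
      exact (mul_eq_zero.mp h2).resolve_left h3

open Polynomial in
lemma hyp_no_double_root (n : ℕ) (b c : ℂ) (hpc : ∀ k : ℕ, poch c k ≠ 0)
    (hcm : ∀ k : ℕ, c + (k:ℂ) ≠ 0) (hP : hyp2F1 n b c ≠ 0)
    (z : ℂ) (hz0 : z ≠ 0) (hz1 : z ≠ 1)
    (h0 : (hyp2F1 n b c).eval z = 0) (h1 : (derivative (hyp2F1 n b c)).eval z = 0) :
    False := by
  set P := hyp2F1 n b c with hPdef
  set N := P.natDegree with hN
  have hlt : N < P.rootMultiplicity z := by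
    rw [Polynomial.lt_rootMultiplicity_iff_isRoot_iterate_derivative_of_mem_nonZeroDivisors hP
      (mem_nonZeroDivisors_of_ne_zero (by exact_mod_cast Nat.cast_ne_zero.mpr (Nat.factorial_ne_zero N)))]
    intro m _
    exact hyp_vanish n b c hpc hcm z hz0 hz1 h0 h1 m
  have hdvd := Polynomial.pow_rootMultiplicity_dvd P z
  have hle := Polynomial.natDegree_le_of_dvd hdvd hP
  rw [Polynomial.natDegree_pow, Polynomial.natDegree_X_sub_C, mul_one] at hle
  omega

lemma poch_ne_zero' {x : ℝ} {k : ℕ} (h : ∀ m : ℕ, m < k → x ≠ -(m:ℝ)) : poch (x:ℂ) k ≠ 0 := by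
  rw [poch]
  apply Finset.prod_ne_zero_iff.mpr
  intro i hi h0
  apply h i (Finset.mem_range.mp hi)
  have : ((x + i : ℝ) : ℂ) = 0 := by push_cast; exact_mod_cast h0
  have := Complex.ofReal_eq_zero.mp this
  linarith

lemma vand (n : ℕ) : ∀ b c : ℂ,
    ∑ k ∈ Finset.range (n+1), (-1:ℂ)^k * (n.choose k : ℂ) * poch b k * poch (c + k) (n - k)
      = poch (c - b) n := by
  induction n with
  | zero => intro b c; simp [poch]
  | succ n ih =>
    intro b c
    rw [Finset.sum_range_succ']
    have hsplit : ∀ k ∈ Finset.range (n+1),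
        (-1:ℂ)^(k+1) * ((n+1).choose (k+1) : ℂ) * poch b (k+1) * poch (c + (k+1:ℕ)) (n+1 - (k+1))
        = ((-1:ℂ)^(k+1) * (n.choose (k+1) : ℂ) * poch b (k+1) * poch (c + (k+1:ℕ)) (n+1-(k+1)))
          + ((-1:ℂ)^(k+1) * (n.choose k : ℂ) * poch b (k+1) * poch (c + (k+1:ℕ)) (n - k)) := by
      intro k hk
      rw [Nat.choose_succ_succ, Nat.succ_sub_succ]
      push_cast
      ring
    rw [Finset.sum_congr rfl hsplit, Finset.sum_add_distrib]
    have this1 := Finset.sum_range_succ'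
      (fun k => (-1:ℂ)^k * (n.choose k : ℂ) * poch b k * poch (c + k) (n+1 - k)) (n+1)
    rw [Finset.sum_range_succ
      (fun k => (-1:ℂ)^k * (n.choose k : ℂ) * poch b k * poch (c + k) (n+1 - k)) (n+1)] at this1
    simp only [Nat.choose_succ_self, Nat.cast_zero, mul_zero, zero_mul, add_zero] at this1
    have hcomb : ∀ k ∈ Finset.range (n+1),
        ((-1:ℂ)^k * (n.choose k : ℂ) * poch b k * poch (c + k) (n+1 - k))
        + ((-1:ℂ)^(k+1) * (n.choose k : ℂ) * poch b (k+1) * poch (c + (k+1:ℕ)) (n - k))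
        = (c - b) * ((-1:ℂ)^k * (n.choose k : ℂ) * poch b k * poch ((c+1) + k) (n - k)) := by
      intro k hk
      have hkn : k ≤ n := Finset.mem_range_succ_iff.mp hk
      have h1 : n + 1 - k = (n - k) + 1 := by omega
      rw [h1, poch_succ' (c + k) (n-k), poch_succ b k]
      have e1 : c + ((k:ℕ):ℂ) + 1 = c + (((k+1:ℕ)):ℂ) := by push_cast; ring
      have e2 : (c+1) + ((k:ℕ):ℂ) = c + (((k+1:ℕ)):ℂ) := by push_cast; ring
      rw [e1, e2]
      push_cast
      ring
    have step : (∑ k ∈ Finset.range (n+1),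
          (-1:ℂ)^(k+1) * (n.choose (k+1) : ℂ) * poch b (k+1) * poch (c + (k+1:ℕ)) (n+1-(k+1)))
        + (∑ k ∈ Finset.range (n+1),
          (-1:ℂ)^(k+1) * (n.choose k : ℂ) * poch b (k+1) * poch (c + (k+1:ℕ)) (n - k))
        + (-1:ℂ)^0 * ((n+1).choose 0 : ℂ) * poch b 0 * poch (c + (0:ℕ)) (n+1 - 0)
        = (c - b) * poch ((c+1) - b) n := by
      rw [← ih b (c+1), Finset.mul_sum, ← Finset.sum_congr rfl hcomb, Finset.sum_add_distrib]
      rw [this1]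
      simp [poch]
      ring
    rw [step, show c + 1 - b = (c - b) + 1 from by ring, ← poch_succ']


/-!
STATEMENT 11: For `n ≥ 1` and real `b`, `c` such that `b` and `c` are not
non-positive integers and `c - b ∉ {0, -1, …, -(n-1)}`, the polynomial
`P = ₂F₁(-n, b; c; ·)` has degree `n`, `P(0) = 1`,
`P(1) = (c-b)_n/(c)_n ≠ 0`, all its roots are simple (`P` is squarefree),
and no root equals `0` or `1`.
-/
theorem stmt_11 (n : ℕ) (hn : 1 ≤ n) (b c : ℝ)
    (hb : ∀ m : ℕ, b ≠ -(m : ℝ))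
    (hc : ∀ m : ℕ, c ≠ -(m : ℝ))
    (hcb : ∀ m : ℕ, m < n → c - b ≠ -(m : ℝ)) :
    (hyp2F1 n (b : ℂ) (c : ℂ)).natDegree = n
      ∧ (hyp2F1 n (b : ℂ) (c : ℂ)).eval 0 = 1
      ∧ (hyp2F1 n (b : ℂ) (c : ℂ)).eval 1 = poch ((c : ℂ) - (b : ℂ)) n / poch (c : ℂ) n
      ∧ (hyp2F1 n (b : ℂ) (c : ℂ)).eval 1 ≠ 0
      ∧ Squarefree (hyp2F1 n (b : ℂ) (c : ℂ))
      ∧ (∀ z : ℂ, (hyp2F1 n (b : ℂ) (c : ℂ)).eval z = 0 → z ≠ 0 ∧ z ≠ 1) := by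
  have hpc : ∀ k : ℕ, poch (c:ℂ) k ≠ 0 := poch_ne_zero hc
  have hpb : ∀ k : ℕ, poch (b:ℂ) k ≠ 0 := poch_ne_zero hb
  have hcm : ∀ k : ℕ, (c:ℂ) + (k:ℂ) ≠ 0 := by
    intro k h0
    apply hc k
    have : ((c + k : ℝ) : ℂ) = 0 := by push_cast; exact_mod_cast h0
    have := Complex.ofReal_eq_zero.mp this
    linarith
  set P := hyp2F1 n (b:ℂ) (c:ℂ) with hP
  -- eval at 0
  have heval0 : P.eval 0 = 1 := by
    rw [← Polynomial.coeff_zero_eq_eval_zero, hyp_coeff]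
    simp [acoef, poch]
  have hPne : P ≠ 0 := fun h => by simp [h] at heval0
  -- natDegree
  have hdeg : P.natDegree = n := by
    apply le_antisymm
    · rw [Polynomial.natDegree_le_iff_coeff_eq_zero]
      intro m hm
      rw [hyp_coeff, acoef, Nat.choose_eq_zero_of_lt hm]
      simp
    · apply Polynomial.le_natDegree_of_ne_zero
      rw [hyp_coeff, acoef]
      simp only [Nat.choose_self, Nat.cast_one, mul_one]
      exact div_ne_zero (by simpa using hpb n) (hpc n)
  -- eval at 1
  have heval1 : P.eval 1 = poch ((c:ℂ) - b) n / poch (c:ℂ) n := by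
    rw [hP, hyp2F1, Polynomial.eval_finset_sum]
    simp only [Polynomial.eval_mul, Polynomial.eval_C, Polynomial.eval_pow, Polynomial.eval_X,
      one_pow, mul_one]
    have hterm : ∀ k ∈ Finset.range (n+1),
        (-1:ℂ)^k * (n.choose k : ℂ) * poch b k / poch c k
        = ((-1:ℂ)^k * (n.choose k : ℂ) * poch b k * poch ((c:ℂ) + k) (n - k)) / poch (c:ℂ) n := by
      intro k hk
      have hkn : (k:ℕ) + (n - k) = n := by
        have := Finset.mem_range_succ_iff.mp hk; omega
      have key := poch_add (c:ℂ) k (n-k)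
      rw [hkn] at key
      have hpX : poch ((c:ℂ) + k) (n-k) ≠ 0 := by
        rw [show ((c:ℂ)+(k:ℂ)) = (((c+k:ℝ)):ℂ) from by push_cast; ring]
        refine poch_ne_zero' (fun m hm h0 => hc (k+m) ?_)
        push_cast
        linarith
      rw [key]
      rw [div_eq_div_iff (hpc k) (mul_ne_zero (hpc k) hpX)]
      ring
    rw [Finset.sum_congr rfl hterm, ← Finset.sum_div, vand n b c]
  -- eval 1 ≠ 0
  have heval1ne : P.eval 1 ≠ 0 := by
    rw [heval1]
    apply div_ne_zero _ (hpc n)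
    have : ((c:ℂ) - b) = (((c - b : ℝ)):ℂ) := by push_cast; ring
    rw [this]
    exact poch_ne_zero' hcb
  -- squarefree
  have hsep : P.Separable := by
    rw [Polynomial.Separable]
    rw [Polynomial.isCoprime_iff_aeval_ne_zero_of_isAlgClosed (k := ℂ) ℂ]
    intro a
    by_contra hcon
    push_neg at hcon
    obtain ⟨h1, h2⟩ := hcon
    have h1' : P.eval a = 0 := by rw [← Polynomial.coe_aeval_eq_eval]; exact h1
    have h2' : (Polynomial.derivative P).eval a = 0 := by
      rw [← Polynomial.coe_aeval_eq_eval]; exact h2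
    have ha0 : a ≠ 0 := fun h => by rw [h] at h1'; rw [heval0] at h1'; exact one_ne_zero h1'
    have ha1 : a ≠ 1 := fun h => by rw [h] at h1'; exact heval1ne h1'
    exact hyp_no_double_root n b c hpc hcm hPne a ha0 ha1 h1' h2'
  refine ⟨hdeg, heval0, heval1, heval1ne, hsep.squarefree, ?_⟩
  intro z hz
  constructor
  · intro h; rw [h, heval0] at hz; exact one_ne_zero hz
  · intro h; rw [h] at hz; exact heval1ne hz
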